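/- arXiv:1510.01548 — 3 statements merged into one kernel-verified Lean document; each statement's English description precedes it below -/
import Mathlib

section
/- With R(θ) = sin(θ)cos(θ)/(m₊² sin²θ + m₋² cos²θ)^{1/2} for coprime positive integers m₋, m₊, one has −R''(θ)/R(θ) = 1 + 3 m₋² m₊² / (m₋² cos²θ + m₊² sin²θ)² for all θ ∈ (0, π/2). In particular, the sectional curvature of the quotient S³/S¹ equals this expression and is strictly greater than 1 on the regular part. -/
open Real Set

/-!
Write `Q = a cos²θ + b sin²θ` with `a = m₋²`, `b = m₊²`, so `R = sin θ cos θ / √Q`.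
Two cancellations make the computation short: `R' = (a cos⁴θ - b sin⁴θ) / Q^{3/2}`, and the
numerator `a cos⁴θ - b sin⁴θ` has derivative `-4 sin θ cos θ · Q`. Since `cos² + sin² = 1` gives
`Q² + (b - a)(a cos⁴θ - b sin⁴θ) = ab`, the second derivative collapses to `R'' = -(1 + 3ab/Q²) R`.
-/

noncomputable section

variable {a b : ℝ}

def quadForm (a b t : ℝ) : ℝ := a * cos t ^ 2 + b * sin t ^ 2

def orbitRadius (a b t : ℝ) : ℝ := sin t * cos t / √(quadForm a b t)

theorem quadForm_pos (ha : 0 < a) (hb : 0 < b) (t : ℝ) : 0 < quadForm a b t := by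
  have hpyth := sin_sq_add_cos_sq t
  have hmin : min a b ≤ quadForm a b t := by
    unfold quadForm
    nlinarith [min_le_left a b, min_le_right a b, sq_nonneg (sin t), sq_nonneg (cos t)]
  exact (lt_min ha hb).trans_le hmin

theorem hasDerivAt_quadForm (a b t : ℝ) :
    HasDerivAt (quadForm a b) (2 * (b - a) * sin t * cos t) t := by
  have h := (((hasDerivAt_cos t).pow 2).const_mul a).add (((hasDerivAt_sin t).pow 2).const_mul b)
  refine h.congr_deriv ?_
  push_cast
  ring

theorem hasDerivAt_sqrt_quadForm (ha : 0 < a) (hb : 0 < b) (t : ℝ) :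
    HasDerivAt (fun t => √(quadForm a b t))
      ((b - a) * sin t * cos t / √(quadForm a b t)) t := by
  refine ((hasDerivAt_quadForm a b t).sqrt (quadForm_pos ha hb t).ne').congr_deriv ?_
  field_simp

theorem sq_quadForm_add_mul (a b t : ℝ) :
    quadForm a b t ^ 2 + (b - a) * (a * cos t ^ 4 - b * sin t ^ 4) = a * b := by
  unfold quadForm
  linear_combination a * b * (sin t ^ 2 + cos t ^ 2 + 1) * sin_sq_add_cos_sq t

theorem hasDerivAt_orbitRadius (ha : 0 < a) (hb : 0 < b) (t : ℝ) :
    HasDerivAt (orbitRadius a b)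
      ((a * cos t ^ 4 - b * sin t ^ 4) / (quadForm a b t * √(quadForm a b t))) t := by
  have hQ := quadForm_pos ha hb t
  have hsq : √(quadForm a b t) ^ 2 = quadForm a b t := sq_sqrt hQ.le
  have h := ((hasDerivAt_sin t).mul (hasDerivAt_cos t)).div (hasDerivAt_sqrt_quadForm ha hb t)
    (sqrt_pos.mpr hQ).ne'
  refine h.congr_deriv ?_
  simp only [Pi.mul_apply]
  set u := √(quadForm a b t)
  have hu : u ≠ 0 := (sqrt_pos.mpr hQ).ne'
  field_simp
  rw [hsq]
  unfold quadForm
  ring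

theorem hasDerivAt_deriv_orbitRadius (ha : 0 < a) (hb : 0 < b) (t : ℝ) :
    HasDerivAt (deriv (orbitRadius a b))
      (-(1 + 3 * a * b / quadForm a b t ^ 2) * orbitRadius a b t) t := by
  have hderiv : deriv (orbitRadius a b) = fun t =>
      (a * cos t ^ 4 - b * sin t ^ 4) / (quadForm a b t * √(quadForm a b t)) :=
    funext fun t => (hasDerivAt_orbitRadius ha hb t).deriv
  have hnum : HasDerivAt (fun t => a * cos t ^ 4 - b * sin t ^ 4)
      (-4 * sin t * cos t * quadForm a b t) t := by
    refine ((((hasDerivAt_cos t).pow 4).const_mul a).sub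
      (((hasDerivAt_sin t).pow 4).const_mul b)).congr_deriv ?_
    unfold quadForm
    push_cast
    ring
  have hQ := quadForm_pos ha hb t
  have h := hnum.div ((hasDerivAt_quadForm a b t).mul (hasDerivAt_sqrt_quadForm ha hb t))
    (mul_pos hQ (sqrt_pos.mpr hQ)).ne'
  rw [hderiv]
  refine h.congr_deriv ?_
  have hsq : √(quadForm a b t) ^ 2 = quadForm a b t := sq_sqrt hQ.le
  simp only [Pi.mul_apply]
  unfold orbitRadius
  set u := √(quadForm a b t)
  have hu : u ≠ 0 := (sqrt_pos.mpr hQ).ne'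
  field_simp
  rw [hsq]
  linear_combination (-3 * sin t * cos t * quadForm a b t) * sq_quadForm_add_mul a b t

theorem neg_deriv_deriv_orbitRadius_div (ha : 0 < a) (hb : 0 < b) {t : ℝ}
    (hsc : sin t * cos t ≠ 0) :
    -deriv (deriv (orbitRadius a b)) t / orbitRadius a b t = 1 + 3 * a * b / quadForm a b t ^ 2 := by
  have hR : orbitRadius a b t ≠ 0 := div_ne_zero hsc (sqrt_pos.mpr (quadForm_pos ha hb t)).ne'
  rw [(hasDerivAt_deriv_orbitRadius ha hb t).deriv, neg_mul, neg_neg, mul_div_assoc, div_self hR,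
    mul_one]

end

theorem statement3_general (mm mp : ℕ) (hmm : 0 < mm) (hmp : 0 < mp)
    (R : ℝ → ℝ)
    (hR : ∀ θ : ℝ, R θ =
      Real.sin θ * Real.cos θ /
        Real.sqrt ((mp : ℝ) ^ 2 * Real.sin θ ^ 2 + (mm : ℝ) ^ 2 * Real.cos θ ^ 2)) :
    ∀ θ ∈ Set.Ioo (0 : ℝ) (π / 2),
      -(deriv (deriv R) θ) / R θ
          = 1 + 3 * (mm : ℝ) ^ 2 * (mp : ℝ) ^ 2 /
              ((mm : ℝ) ^ 2 * Real.cos θ ^ 2 + (mp : ℝ) ^ 2 * Real.sin θ ^ 2) ^ 2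
        ∧ 1 < -(deriv (deriv R) θ) / R θ := by
  have ha : (0 : ℝ) < (mm : ℝ) ^ 2 := by positivity
  have hb : (0 : ℝ) < (mp : ℝ) ^ 2 := by positivity
  have hR' : R = orbitRadius ((mm : ℝ) ^ 2) ((mp : ℝ) ^ 2) :=
    funext fun θ => by rw [hR, orbitRadius, quadForm, add_comm]
  rintro θ ⟨hθ0, hθπ⟩
  have hsin : 0 < sin θ := sin_pos_of_pos_of_lt_pi hθ0 (by linarith [pi_pos])
  have hcos : 0 < cos θ := cos_pos_of_mem_Ioo ⟨by linarith, hθπ⟩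
  rw [hR', neg_deriv_deriv_orbitRadius_div ha hb (mul_pos hsin hcos).ne']
  refine ⟨rfl, lt_add_of_pos_right 1 (div_pos ?_ (pow_pos (quadForm_pos ha hb θ) 2))⟩
  positivity

/-- For `R(θ) = sin θ cos θ / (m₊² sin²θ + m₋² cos²θ)^{1/2}` with `m₋, m₊` coprime
positive integers, one has `-R''(θ)/R(θ) = 1 + 3 m₋² m₊² / (m₋² cos²θ + m₊² sin²θ)²`
on `(0, π/2)`; in particular the sectional curvature `-R''/R` of the quotient
`S³/S¹` equals this expression and is strictly greater than `1` on the regular part. -/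
theorem statement3 (mm mp : ℕ) (hcop : Nat.Coprime mm mp) (hmm : 0 < mm) (hmp : 0 < mp)
    (R : ℝ → ℝ)
    (hR : ∀ θ : ℝ, R θ =
      Real.sin θ * Real.cos θ /
        Real.sqrt ((mp : ℝ) ^ 2 * Real.sin θ ^ 2 + (mm : ℝ) ^ 2 * Real.cos θ ^ 2)) :
    ∀ θ ∈ Set.Ioo (0 : ℝ) (π / 2),
      -(deriv (deriv R) θ) / R θ
          = 1 + 3 * (mm : ℝ) ^ 2 * (mp : ℝ) ^ 2 /
              ((mm : ℝ) ^ 2 * Real.cos θ ^ 2 + (mp : ℝ) ^ 2 * Real.sin θ ^ 2) ^ 2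
        ∧ 1 < -(deriv (deriv R) θ) / R θ :=
  statement3_general mm mp hmm hmp R hR
end

section
/- The unique solution R on [0, π/2] of the second-order ODE R''(θ) = −R(θ)·(1 + 3 m₋² m₊² / (m₋² cos²θ + m₊² sin²θ)²) with initial conditions R(0) = 0 and R'(0) = 1/m₋ is R(θ) = sin(θ)cos(θ)/(m₊² sin²θ + m₋² cos²θ)^{1/2}. -/
/-!
Write `w θ = m₊² sin²θ + m₋² cos²θ`. Differentiating the closed form gives
`R' = (m₋² cos⁴θ - m₊² sin⁴θ) / w^{3/2}`, and differentiating once more the ODE reduces to the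
identity `w² + (m₊² - m₋²)(m₋² cos⁴θ - m₊² sin⁴θ) = m₋² m₊² (sin²θ + cos²θ)²`. Uniqueness holds
for any `R'' = -q R` with `q` continuous on a compact interval: the first-order system for
`(R, R')` is then Lipschitz in the state, uniformly in `θ`, with constant `max 1 (sup |q|)`.
-/

open Real Set

theorem lipschitzWith_companion (c : ℝ) :
    LipschitzWith (max 1 ‖c‖₊) (fun p : ℝ × ℝ => (p.2, -p.1 * c)) := by
  convert (LipschitzWith.prod_snd (α := ℝ) (β := ℝ)).prodMk
    ((lipschitzWith_smul (-c)).comp LipschitzWith.prod_fst) using 2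
  · simp
  · simp [mul_comm]

theorem second_order_linear_ODE_solution_unique {q f f' g g' : ℝ → ℝ} {a b : ℝ}
    (hq : ContinuousOn q (Icc a b))
    (hf : ∀ t ∈ Icc a b, HasDerivAt f (f' t) t)
    (hf' : ∀ t ∈ Icc a b, HasDerivAt f' (-f t * q t) t)
    (hg : ∀ t ∈ Icc a b, HasDerivAt g (g' t) t)
    (hg' : ∀ t ∈ Icc a b, HasDerivAt g' (-g t * q t) t)
    (ha : f a = g a) (ha' : f' a = g' a) :
    EqOn f g (Icc a b) := by
  obtain ⟨C, hC⟩ := isCompact_Icc.exists_bound_of_continuousOn hq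
  have hv : ∀ t ∈ Ico a b, LipschitzOnWith (max 1 C.toNNReal)
      (fun p : ℝ × ℝ => (p.2, -p.1 * q t)) univ := by
    intro t ht
    refine ((lipschitzWith_companion (q t)).weaken (max_le_max le_rfl ?_)).lipschitzOnWith
    rw [← NNReal.coe_le_coe, coe_nnnorm, Real.coe_toNNReal']
    exact (hC t (Ico_subset_Icc_self ht)).trans (le_max_left _ _)
  have hsystem : ∀ {u u' : ℝ → ℝ}, (∀ t ∈ Icc a b, HasDerivAt u (u' t) t) →
      (∀ t ∈ Icc a b, HasDerivAt u' (-u t * q t) t) →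
      ContinuousOn (fun t => (u t, u' t)) (Icc a b) ∧
      ∀ t ∈ Ico a b, HasDerivWithinAt (fun t => (u t, u' t)) (u' t, -u t * q t) (Ici t) t :=
    fun hu hu' =>
      ⟨fun t ht => ((hu t ht).continuousAt.prodMk (hu' t ht).continuousAt).continuousWithinAt,
        fun t ht => ((hu t (Ico_subset_Icc_self ht)).prodMk
          (hu' t (Ico_subset_Icc_self ht))).hasDerivWithinAt⟩
  obtain ⟨hfc, hfd⟩ := hsystem hf hf'
  obtain ⟨hgc, hgd⟩ := hsystem hg hg'
  intro t ht
  exact congrArg Prod.fst <| ODE_solution_unique_of_mem_Icc_right hv hfc hfd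
    (fun _ _ => mem_univ _) hgc hgd (fun _ _ => mem_univ _) (Prod.ext ha ha') ht

noncomputable def weight (mm mp θ : ℝ) : ℝ := mp ^ 2 * sin θ ^ 2 + mm ^ 2 * cos θ ^ 2

theorem weight_pos {mm mp : ℝ} (hmm : mm ≠ 0) (hmp : mp ≠ 0) (θ : ℝ) : 0 < weight mm mp θ := by
  have hmin : 0 < min (mm ^ 2) (mp ^ 2) := lt_min (by positivity) (by positivity)
  have hs := mul_nonneg (sub_nonneg.2 (min_le_right (mm ^ 2) (mp ^ 2))) (sq_nonneg (sin θ))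
  have hc := mul_nonneg (sub_nonneg.2 (min_le_left (mm ^ 2) (mp ^ 2))) (sq_nonneg (cos θ))
  unfold weight
  nlinarith [sin_sq_add_cos_sq θ]

theorem hasDerivAt_weight (mm mp θ : ℝ) :
    HasDerivAt (weight mm mp) (2 * (mp ^ 2 - mm ^ 2) * sin θ * cos θ) θ :=
  ((((hasDerivAt_sin θ).pow 2).const_mul (mp ^ 2)).add
      (((hasDerivAt_cos θ).pow 2).const_mul (mm ^ 2))).congr_deriv (by ring)

theorem weight_sq_add (mm mp θ : ℝ) :
    weight mm mp θ ^ 2 + (mp ^ 2 - mm ^ 2) * (mm ^ 2 * cos θ ^ 4 - mp ^ 2 * sin θ ^ 4) =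
      mm ^ 2 * mp ^ 2 := by
  unfold weight
  linear_combination mm ^ 2 * mp ^ 2 * (sin θ ^ 2 + cos θ ^ 2 + 1) * sin_sq_add_cos_sq θ

noncomputable def solution (mm mp θ : ℝ) : ℝ := sin θ * cos θ / √(weight mm mp θ)

noncomputable def solutionDeriv (mm mp θ : ℝ) : ℝ :=
  (mm ^ 2 * cos θ ^ 4 - mp ^ 2 * sin θ ^ 4) / √(weight mm mp θ) ^ 3

theorem solution_zero (mm mp : ℝ) : solution mm mp 0 = 0 := by
  simp [solution]

theorem solutionDeriv_zero {mm : ℝ} (hmm : 0 < mm) (mp : ℝ) : solutionDeriv mm mp 0 = 1 / mm := by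
  have hw : √(weight mm mp 0) = mm := by simp [weight, sqrt_sq hmm.le]
  rw [solutionDeriv, hw, sin_zero, cos_zero]
  field_simp
  ring

theorem hasDerivAt_solution {mm mp : ℝ} (hmm : mm ≠ 0) (hmp : mp ≠ 0) (θ : ℝ) :
    HasDerivAt (solution mm mp) (solutionDeriv mm mp θ) θ := by
  have hw := weight_pos hmm hmp θ
  refine (((hasDerivAt_sin θ).mul (hasDerivAt_cos θ)).div
    ((hasDerivAt_weight mm mp θ).sqrt hw.ne') (sqrt_pos.2 hw).ne').congr_deriv ?_
  unfold solutionDeriv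
  field_simp
  rw [sq_sqrt hw.le, weight, Pi.mul_apply]
  ring

theorem hasDerivAt_solutionDeriv {mm mp : ℝ} (hmm : mm ≠ 0) (hmp : mp ≠ 0) (θ : ℝ) :
    HasDerivAt (solutionDeriv mm mp)
      (-solution mm mp θ * (1 + 3 * mm ^ 2 * mp ^ 2 / weight mm mp θ ^ 2)) θ := by
  have hw := weight_pos hmm hmp θ
  have hN : HasDerivAt (fun θ => mm ^ 2 * cos θ ^ 4 - mp ^ 2 * sin θ ^ 4)
      (-4 * sin θ * cos θ * weight mm mp θ) θ :=
    ((((hasDerivAt_cos θ).pow 4).const_mul (mm ^ 2)).sub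
      (((hasDerivAt_sin θ).pow 4).const_mul (mp ^ 2))).congr_deriv (by rw [weight]; ring)
  have hD : HasDerivAt (fun θ => √(weight mm mp θ) ^ 3)
      (3 * (mp ^ 2 - mm ^ 2) * sin θ * cos θ * √(weight mm mp θ)) θ :=
    (((hasDerivAt_weight mm mp θ).sqrt hw.ne').pow 3).congr_deriv (by field_simp; ring)
  refine (hN.div hD (pow_ne_zero 3 (sqrt_pos.2 hw).ne')).congr_deriv ?_
  rw [solution, pow_succ, sq_sqrt hw.le]
  field_simp
  linear_combination (-3 * sin θ * cos θ) * weight_sq_add mm mp θ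

/-- The unique solution `R` on `[0, π/2]` of the second-order ODE
`R'' = -R (1 + 3 m₋² m₊² / (m₋² cos²θ + m₊² sin²θ)²)` with `R(0) = 0` and
`R'(0) = 1/m₋` is `R(θ) = sin θ cos θ / (m₊² sin²θ + m₋² cos²θ)^{1/2}`. -/
theorem statement4 (mm mp : ℝ) (hmm : 0 < mm) (hmp : 0 < mp)
    (R R' : ℝ → ℝ)
    (hR : ∀ θ ∈ Set.Icc (0 : ℝ) (π / 2), HasDerivAt R (R' θ) θ)
    (hR' : ∀ θ ∈ Set.Icc (0 : ℝ) (π / 2),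
      HasDerivAt R'
        (-(R θ) * (1 + 3 * mm ^ 2 * mp ^ 2 /
          (mm ^ 2 * Real.cos θ ^ 2 + mp ^ 2 * Real.sin θ ^ 2) ^ 2)) θ)
    (h0 : R 0 = 0) (h0' : R' 0 = 1 / mm) :
    ∀ θ ∈ Set.Icc (0 : ℝ) (π / 2),
      R θ = Real.sin θ * Real.cos θ /
        Real.sqrt (mp ^ 2 * Real.sin θ ^ 2 + mm ^ 2 * Real.cos θ ^ 2) := by
  have hweight : ∀ θ, mm ^ 2 * cos θ ^ 2 + mp ^ 2 * sin θ ^ 2 = weight mm mp θ :=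
    fun θ => add_comm _ _
  simp only [hweight] at hR'
  have hq : ContinuousOn (fun θ => 1 + 3 * mm ^ 2 * mp ^ 2 / weight mm mp θ ^ 2) (Icc 0 (π / 2)) :=
    continuousOn_const.add <| continuousOn_const.div
      (fun θ _ => ((hasDerivAt_weight mm mp θ).continuousAt.pow 2).continuousWithinAt)
      (fun θ _ => pow_ne_zero 2 (weight_pos hmm.ne' hmp.ne' θ).ne')
  exact second_order_linear_ODE_solution_unique hq hR hR'
    (fun θ _ => hasDerivAt_solution hmm.ne' hmp.ne' θ)
    (fun θ _ => hasDerivAt_solutionDeriv hmm.ne' hmp.ne' θ)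
    (h0.trans (solution_zero mm mp).symm) (h0'.trans (solutionDeriv_zero hmm mp).symm)
end

section
/- Let R : [0,π/2] → ℝ satisfy R(0)=0, R'(0)=1/m (with m ≥ 2 an integer), R > 0 on (0,π/2), and −R''/R > 1 + ã on (0,π/2) for some ã > 0. Let η : [0,π/2] → [0,∞) be smooth with η'(0) = 1 − 1/m, η concave on [0,τ/2], η''(θ)/η(θ) ≤ −1 on (0,τ/2] where η > 0, η supported in [0,τ] with τ ≤ π/4, and suppose there is 0 < b < 1 with bη ≤ R. Then on (0, τ/2], −(R+η)''/(R+η) > 1 + bã/2. -/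
open Real Set

/-- Key curvature estimate for resolving a conical singularity: if `R` satisfies
`R(0) = 0`, `R'(0) = 1/m`, `R > 0` and `-R''/R > 1 + ã` on `(0, π/2)`, and if the
smooth nonnegative bump `η` satisfies `η'(0) = 1 - 1/m`, is concave on `[0, τ/2]`
with `η''/η ≤ -1` where it is positive there, is supported in `[0, τ]` with
`τ ≤ π/4`, and `b η ≤ R` for some `0 < b < 1`, then on `(0, τ/2]` one has
`-(R+η)''/(R+η) > 1 + b ã / 2`. -/
theorem statement5 (m : ℕ) (hm : 2 ≤ m) (τ aT b : ℝ)
    (hτ0 : 0 < τ) (hτ : τ ≤ π / 4) (haT : 0 < aT) (hb0 : 0 < b) (hb1 : b < 1)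
    (R η : ℝ → ℝ)
    (hR0 : R 0 = 0) (hR0' : deriv R 0 = 1 / (m : ℝ))
    (hRpos : ∀ θ ∈ Set.Ioo (0 : ℝ) (π / 2), 0 < R θ)
    (hRcurv : ∀ θ ∈ Set.Ioo (0 : ℝ) (π / 2), 1 + aT < -(deriv (deriv R) θ) / R θ)
    (hη : ContDiff ℝ (⊤ : ℕ∞) η)
    (hηnonneg : ∀ θ : ℝ, 0 ≤ η θ)
    (hη0' : deriv η 0 = 1 - 1 / (m : ℝ))
    (hηconc : ConcaveOn ℝ (Set.Icc 0 (τ / 2)) η)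
    (hηpos : ∀ θ ∈ Set.Ioc (0 : ℝ) (τ / 2), 0 < η θ)
    (hηcurv : ∀ θ ∈ Set.Ioc (0 : ℝ) (τ / 2), deriv (deriv η) θ / η θ ≤ -1)
    (hηsupp : ∀ θ ∈ Set.Icc τ (π / 2), η θ = 0)
    (hbη : ∀ θ ∈ Set.Icc (0 : ℝ) (π / 2), b * η θ ≤ R θ) :
    ∀ θ ∈ Set.Ioc (0 : ℝ) (τ / 2),
      1 + b * aT / 2 < -(deriv (deriv R) θ + deriv (deriv η) θ) / (R θ + η θ) := by
  intro θ hθ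
  have hθπ : θ ∈ Set.Ioo (0 : ℝ) (π / 2) := by
    constructor
    · exact hθ.1
    · have := hθ.2
      nlinarith [pi_pos]
  have hRθ := hRpos θ hθπ
  have hηθ := hηpos θ hθ
  have hsum : 0 < R θ + η θ := by linarith
  have h1 : (1 + aT) * R θ < -(deriv (deriv R) θ) :=
    (lt_div_iff₀ hRθ).mp (hRcurv θ hθπ)
  have h2 : deriv (deriv η) θ ≤ -1 * η θ :=
    (div_le_iff₀ hηθ).mp (hηcurv θ hθ)
  have h3 : b * η θ ≤ R θ := hbη θ ⟨le_of_lt hθπ.1, le_of_lt hθπ.2⟩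
  rw [lt_div_iff₀ hsum]
  nlinarith [mul_pos haT hRθ, mul_le_mul_of_nonneg_left h3 haT.le]
end
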